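/- Suppose (θ₁, θ₂, θ₃, θ₄) ∈ (0, 2π)⁴ with θ₁ + θ₂ = π = θ₃ + θ₄ satisfies the central configuration equations of the planar 1+4 body problem with positive mass parameters μ₁, μ₂, μ₃, μ₄. Then θ₁ = θ₄, θ₂ = θ₃, and μ₂ = μ₄. -/

import Mathlib

open Real Set

noncomputable def f (x : ℝ) : ℝ := Real.sin x * (1 - 1 / (8 * Real.sin (x/2)^3))

/-!
Write `f x = sin x * u x` with `u x = 1 - 1 / (8 sin³(x/2))`; then `f (π - x) = sin x * v x` with
`v x = u (π - x) = 1 - 1 / (8 cos³(x/2))`. Once `θ₂ = π - θ₁` and `θ₃ = π - θ₄`, the first and third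
equations say that `(u θ₁, v θ₁)` and `(u θ₄, v θ₄)` lie on a common open ray from the origin. On
`(0, π)` the Wronskian `u' v - u v'` equals `3 (8 (a⁵ + b⁵) - 1) / (128 a⁴ b⁴)` with
`a = sin (x/2)`, `b = cos (x/2)`, which is positive because `a² + b² = 1`. Since `u` increases and
`v` decreases, `v` (or `u`) keeps its sign between two points on a common ray, and there the slope
`u / v` (or `-v / u`) is strictly increasing. So the curve `(u, v)` meets each open ray at most
once, which forces `θ₁ = θ₄` and then `μ₂ = μ₄`.
-/

section Wronskian

variable {u v u' v' : ℝ → ℝ} {s : Set ℝ}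

theorem strictMonoOn_of_hasDerivAt_pos {g g' : ℝ → ℝ} (hs : Convex ℝ s)
    (hg : ∀ x ∈ s, HasDerivAt g (g' x) x) (hg' : ∀ x ∈ s, 0 < g' x) : StrictMonoOn g s :=
  strictMonoOn_of_hasDerivWithinAt_pos hs
    (fun x hx => (hg x hx).continuousAt.continuousWithinAt)
    (fun x hx => (hg x (interior_subset hx)).hasDerivWithinAt)
    (fun x hx => hg' x (interior_subset hx))

theorem strictMonoOn_div_of_wronskian_pos (hs : Convex ℝ s)
    (hu : ∀ x ∈ s, HasDerivAt u (u' x) x) (hv : ∀ x ∈ s, HasDerivAt v (v' x) x)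
    (hv₀ : ∀ x ∈ s, v x ≠ 0) (hW : ∀ x ∈ s, 0 < u' x * v x - u x * v' x) :
    StrictMonoOn (fun x => u x / v x) s :=
  strictMonoOn_of_hasDerivAt_pos hs (fun x hx => (hu x hx).div (hv x hx) (hv₀ x hx))
    (fun x hx => div_pos (hW x hx) (pow_two_pos_of_ne_zero (hv₀ x hx)))

theorem eq_of_mul_eq_mul_of_wronskian_pos (hs : s.OrdConnected)
    (hu : ∀ x ∈ s, HasDerivAt u (u' x) x) (hv : ∀ x ∈ s, HasDerivAt v (v' x) x)
    (hW : ∀ x ∈ s, 0 < u' x * v x - u x * v' x) (hv_mono : MonotoneOn v s)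
    {x y : ℝ} (hx : x ∈ s) (hy : y ∈ s) (hvxy : 0 < v x * v y)
    (huv : u x * v y = u y * v x) : x = y := by
  have slope_lt : ∀ x ∈ s, ∀ y ∈ s, 0 < v x * v y → x < y → u x / v x < u y / v y := by
    intro x hx y hy hvxy hxy
    have hsub : Icc x y ⊆ s := hs.out hx hy
    have hv₀ : ∀ z ∈ Icc x y, v z ≠ 0 := by
      intro z hz hz₀
      have hxz := hv_mono hx (hsub hz) hz.1
      have hzy := hv_mono (hsub hz) hy hz.2
      nlinarith
    exact strictMonoOn_div_of_wronskian_pos (convex_Icc x y)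
      (fun z hz => hu z (hsub hz)) (fun z hz => hv z (hsub hz)) hv₀ (fun z hz => hW z (hsub hz))
      (left_mem_Icc.2 hxy.le) (right_mem_Icc.2 hxy.le) hxy
  have hslope : u x / v x = u y / v y := by
    rw [div_eq_div_iff (left_ne_zero_of_mul hvxy.ne') (right_ne_zero_of_mul hvxy.ne')]
    linarith
  rcases lt_trichotomy x y with hxy | hxy | hxy
  · exact absurd hslope (slope_lt x hx y hy hvxy hxy).ne
  · exact hxy
  · exact absurd hslope (slope_lt y hy x hx (by linarith) hxy).ne'

/-- A planar curve `(u, v)` with positive Wronskian, `u` increasing and `v` decreasing meets every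
open ray from the origin at most once. -/
theorem eq_and_eq_of_mul_eq_mul_of_wronskian_pos (hs : s.OrdConnected)
    (hu : ∀ x ∈ s, HasDerivAt u (u' x) x) (hv : ∀ x ∈ s, HasDerivAt v (v' x) x)
    (hW : ∀ x ∈ s, 0 < u' x * v x - u x * v' x)
    (hu_mono : MonotoneOn u s) (hv_anti : AntitoneOn v s)
    {x y c d : ℝ} (hx : x ∈ s) (hy : y ∈ s) (hc : 0 < c) (hd : 0 < d)
    (hcu : c * u x = d * u y) (hcv : c * v x = d * v y) : x = y ∧ c = d := by
  have huv_ne : ∀ z ∈ s, u z ≠ 0 ∨ v z ≠ 0 := by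
    intro z hz
    by_contra! h
    simpa [h.1, h.2] using hW z hz
  have hcross : u x * v y = u y * v x := by
    apply mul_left_cancel₀ (mul_pos hc hd).ne'
    linear_combination d * v y * hcu - d * u y * hcv
  have hxy : x = y := by
    rcases eq_or_ne (v x) 0 with hvx₀ | hvx
    · have hvy₀ : v y = 0 := by simpa [hvx₀, hd.ne'] using hcv
      have hux : u x ≠ 0 := (huv_ne x hx).resolve_right (not_not.2 hvx₀)
      refine eq_of_mul_eq_mul_of_wronskian_pos hs (u := fun z => -v z) (v := u)
        (fun z hz => (hv z hz).neg) hu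
        (fun z hz => by linarith [hW z hz]) hu_mono hx hy ?_ (by simp [hvx₀, hvy₀])
      refine pos_of_mul_pos_right (a := d) ?_ hd.le
      linear_combination mul_pos hc (mul_self_pos.2 hux) + u x * hcu
    · refine eq_of_mul_eq_mul_of_wronskian_pos hs (u := fun z => -u z) (v := fun z => -v z)
        (fun z hz => (hu z hz).neg) (fun z hz => (hv z hz).neg)
        (fun z hz => by linarith [hW z hz]) hv_anti.neg hx hy ?_ (by linear_combination hcross)
      refine pos_of_mul_pos_right (a := d) ?_ hd.le
      linear_combination mul_pos hc (mul_self_pos.2 hvx) + v x * hcv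
  subst hxy
  rcases huv_ne x hx with hux | hvx
  · exact ⟨rfl, mul_right_cancel₀ hux hcu⟩
  · exact ⟨rfl, mul_right_cancel₀ hvx hcv⟩

end Wronskian

theorem one_lt_eight_mul_pow_five_add_pow_five {a b : ℝ} (ha : 0 < a) (hb : 0 < b)
    (hab : a ^ 2 + b ^ 2 = 1) : 1 < 8 * (a ^ 5 + b ^ 5) := by
  wlog hba : b ≤ a generalizing a b
  · linarith [this hb ha (by linarith) (by linarith)]
  have ha2 : 1 / 2 ≤ a ^ 2 := by nlinarith
  have ha1 : 1 / 2 < a := by nlinarith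
  nlinarith [pow_pos hb 5, mul_le_mul ha2 ha2 (by norm_num) (sq_nonneg a)]

theorem sin_half_pos {x : ℝ} (hx : x ∈ Ioo 0 π) : 0 < sin (x / 2) :=
  sin_pos_of_pos_of_lt_pi (by linarith [hx.1]) (by linarith [hx.2, pi_pos])

theorem cos_half_pos {x : ℝ} (hx : x ∈ Ioo 0 π) : 0 < cos (x / 2) :=
  cos_pos_of_mem_Ioo ⟨by linarith [hx.1, pi_pos], by linarith [hx.2]⟩

/-- The factor of `f x = sin x * chordTerm x`; `2 sin (x/2)` is the length of the chord subtending
the angle `x` on the unit circle. -/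
noncomputable def chordTerm (x : ℝ) : ℝ := 1 - 1 / (8 * sin (x / 2) ^ 3)

theorem chordTerm_pi_sub (x : ℝ) : chordTerm (π - x) = 1 - 1 / (8 * cos (x / 2) ^ 3) := by
  rw [chordTerm, show (π - x) / 2 = π / 2 - x / 2 by ring, sin_pi_div_two_sub]

theorem f_pi_sub (x : ℝ) : f (π - x) = sin x * chordTerm (π - x) := by
  rw [f, sin_pi_sub, chordTerm]

theorem hasDerivAt_chordTerm {x : ℝ} (hx : sin (x / 2) ≠ 0) :
    HasDerivAt chordTerm (3 * cos (x / 2) / (16 * sin (x / 2) ^ 4)) x := by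
  have hsin : HasDerivAt (fun y => 8 * sin (y / 2) ^ 3)
      (8 * (3 * sin (x / 2) ^ 2 * (cos (x / 2) * (1 / 2)))) x := by
    simpa using (((hasDerivAt_id x).div_const 2).sin.pow 3).const_mul 8
  refine ((hasDerivAt_const x (1 : ℝ)).sub
    ((hasDerivAt_const x (1 : ℝ)).div hsin (by positivity))).congr_deriv ?_
  field_simp
  ring

theorem hasDerivAt_chordTerm_pi_sub {x : ℝ} (hx : cos (x / 2) ≠ 0) :
    HasDerivAt (fun y => chordTerm (π - y)) (-(3 * sin (x / 2) / (16 * cos (x / 2) ^ 4))) x := by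
  have hsin : sin ((π - x) / 2) = cos (x / 2) := by
    rw [show (π - x) / 2 = π / 2 - x / 2 by ring, sin_pi_div_two_sub]
  have hcos : cos ((π - x) / 2) = sin (x / 2) := by
    rw [show (π - x) / 2 = π / 2 - x / 2 by ring, cos_pi_div_two_sub]
  have := (hasDerivAt_chordTerm (hsin ▸ hx)).comp_const_sub π x
  rwa [hsin, hcos] at this

theorem chordTerm_wronskian_pos {x : ℝ} (hx : x ∈ Ioo 0 π) :
    0 < 3 * cos (x / 2) / (16 * sin (x / 2) ^ 4) * chordTerm (π - x)
      - chordTerm x * -(3 * sin (x / 2) / (16 * cos (x / 2) ^ 4)) := by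
  have ha := sin_half_pos hx
  have hb := cos_half_pos hx
  have hW : 3 * cos (x / 2) / (16 * sin (x / 2) ^ 4) * chordTerm (π - x)
      - chordTerm x * -(3 * sin (x / 2) / (16 * cos (x / 2) ^ 4))
      = 3 * (8 * (sin (x / 2) ^ 5 + cos (x / 2) ^ 5) - (sin (x / 2) ^ 2 + cos (x / 2) ^ 2))
        / (128 * sin (x / 2) ^ 4 * cos (x / 2) ^ 4) := by
    rw [chordTerm_pi_sub, chordTerm]
    field_simp
    ring
  rw [hW, sin_sq_add_cos_sq]
  have := one_lt_eight_mul_pow_five_add_pow_five ha hb (sin_sq_add_cos_sq _)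
  apply div_pos <;> nlinarith [pow_pos ha 4, pow_pos hb 4]

theorem strictMonoOn_chordTerm : StrictMonoOn chordTerm (Ioo 0 π) :=
  strictMonoOn_of_hasDerivAt_pos (convex_Ioo 0 π)
    (fun x hx => hasDerivAt_chordTerm (sin_half_pos hx).ne')
    (fun x hx => by have := sin_half_pos hx; have := cos_half_pos hx; positivity)

theorem antitoneOn_chordTerm_pi_sub : AntitoneOn (fun x => chordTerm (π - x)) (Ioo 0 π) :=
  fun x hx y hy hxy => strictMonoOn_chordTerm.monotoneOn
    ⟨by linarith [hy.2], by linarith [hy.1]⟩ ⟨by linarith [hx.2], by linarith [hx.1]⟩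
    (by linarith)

theorem eq_and_eq_of_mul_f_eq {x y c d : ℝ} (hx : x ∈ Ioo 0 π) (hy : y ∈ Ioo 0 π)
    (hc : 0 < c) (hd : 0 < d) (hf : c * f x = d * f y)
    (hf_pi_sub : c * f (π - x) = d * f (π - y)) : x = y ∧ c = d := by
  have hsinx : 0 < sin x := sin_pos_of_pos_of_lt_pi hx.1 hx.2
  have hsiny : 0 < sin y := sin_pos_of_pos_of_lt_pi hy.1 hy.2
  obtain ⟨rfl, hcd⟩ := eq_and_eq_of_mul_eq_mul_of_wronskian_pos ordConnected_Ioo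
    (fun z hz => hasDerivAt_chordTerm (sin_half_pos hz).ne')
    (fun z hz => hasDerivAt_chordTerm_pi_sub (cos_half_pos hz).ne')
    (fun z hz => chordTerm_wronskian_pos hz) strictMonoOn_chordTerm.monotoneOn
    antitoneOn_chordTerm_pi_sub hx hy (mul_pos hc hsinx) (mul_pos hd hsiny)
    (by rw [mul_assoc, mul_assoc]; exact hf)
    (by rw [f_pi_sub, f_pi_sub] at hf_pi_sub; linear_combination hf_pi_sub)
  exact ⟨rfl, mul_right_cancel₀ hsinx.ne' hcd⟩

theorem stmt13_general (θ₁ θ₂ θ₃ θ₄ μ₂ μ₄ : ℝ)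
    (h1 : θ₁ ∈ Ioo (0:ℝ) (2*π)) (h2 : θ₂ ∈ Ioo (0:ℝ) (2*π))
    (h3 : θ₃ ∈ Ioo (0:ℝ) (2*π)) (h4 : θ₄ ∈ Ioo (0:ℝ) (2*π))
    (hsum : θ₁ + θ₂ = π ∧ θ₃ + θ₄ = π)
    (hμ2 : 0 < μ₂) (hμ4 : 0 < μ₄)
    (e1 : μ₂ * f θ₁ = μ₄ * f θ₄)
    (e3 : μ₄ * f θ₃ = μ₂ * f θ₂) :
    θ₁ = θ₄ ∧ θ₂ = θ₃ ∧ μ₂ = μ₄ := by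
  obtain ⟨hθ₁₂, hθ₃₄⟩ := hsum
  have hθ₁ : θ₁ ∈ Ioo 0 π := ⟨h1.1, by linarith [h2.1]⟩
  have hθ₄ : θ₄ ∈ Ioo 0 π := ⟨h4.1, by linarith [h3.1]⟩
  obtain rfl : θ₂ = π - θ₁ := by linarith
  obtain rfl : θ₃ = π - θ₄ := by linarith
  obtain ⟨rfl, rfl⟩ := eq_and_eq_of_mul_f_eq hθ₁ hθ₄ hμ2 hμ4 e1 e3.symm
  exact ⟨rfl, rfl, rfl⟩

theorem stmt13 (θ₁ θ₂ θ₃ θ₄ μ₁ μ₂ μ₃ μ₄ : ℝ)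
    (h1 : θ₁ ∈ Ioo (0:ℝ) (2*π)) (h2 : θ₂ ∈ Ioo (0:ℝ) (2*π))
    (h3 : θ₃ ∈ Ioo (0:ℝ) (2*π)) (h4 : θ₄ ∈ Ioo (0:ℝ) (2*π))
    (hsum : θ₁ + θ₂ = π ∧ θ₃ + θ₄ = π)
    (hμ1 : 0 < μ₁) (hμ2 : 0 < μ₂) (hμ3 : 0 < μ₃) (hμ4 : 0 < μ₄)
    (e1 : μ₂ * f θ₁ = μ₄ * f θ₄)
    (e2 : μ₃ * f θ₂ + μ₄ * f (θ₂ + θ₃) = μ₁ * f θ₁)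
    (e3 : μ₄ * f θ₃ = μ₂ * f θ₂)
    (e4 : μ₁ * f θ₁ + μ₂ * f (θ₁ + θ₄) = μ₃ * f θ₃) :
    θ₁ = θ₄ ∧ θ₂ = θ₃ ∧ μ₂ = μ₄ :=
  stmt13_general θ₁ θ₂ θ₃ θ₄ μ₂ μ₄ h1 h2 h3 h4 hsum hμ2 hμ4 e1 e3
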